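/- (Gerlach's lemma) Let Q be a positivity preserving form in the wide sense with compact resolvent G_α. Suppose f ∈ L²(X,m) with f > 0 a.e. satisfies G₁ f ≥ c f for some constant c > 0. Then there exist finitely many pairwise disjoint Q-connected components C₁, ..., C_l such that X = ⋃_{i=1}^l C_i up to an m-null set, and this decomposition is unique up to sets of measure zero. -/

import Mathlib

open MeasureTheory Filter Topology RealInnerProductSpace

noncomputable section

variable {X : Type*} [MeasurableSpace X]

open scoped Classical in
/-- Multiplication by the indicator function of a set `A`, as a map on `L²`. -/
def indMul {μ : Measure X} (A : Set X) (f : Lp ℝ 2 μ) : Lp ℝ 2 μ :=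
  if h : MeasurableSet A then ((Lp.memLp f).indicator h).toLp else 0

/-- A closed (nonnegative, symmetric) quadratic form in the wide sense on `L²(X,m)`:
its domain is a not necessarily dense subspace which is complete in the form norm. -/
structure WideForm (μ : Measure X) where
  dom : Submodule ℝ (Lp ℝ 2 μ)
  Q : Lp ℝ 2 μ → Lp ℝ 2 μ → ℝ
  symm : ∀ u v, Q u v = Q v u
  add_left : ∀ u v w, Q (u + v) w = Q u w + Q v w
  smul_left : ∀ (c : ℝ) u v, Q (c • u) v = c * Q u v
  nonneg : ∀ u, 0 ≤ Q u u
  closed : ∀ f : ℕ → Lp ℝ 2 μ, (∀ n, f n ∈ dom) →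
    (∀ ε > 0, ∃ N, ∀ m ≥ N, ∀ n ≥ N,
      Q (f m - f n) (f m - f n) + ‖f m - f n‖ ^ 2 < ε) →
    ∃ g ∈ dom, Tendsto (fun n => Q (f n - g) (f n - g) + ‖f n - g‖ ^ 2) atTop (nhds 0)

/-- `G` is the resolvent family of the closed form `T`. -/
def WideForm.IsResolvent {μ : Measure X} (T : WideForm μ)
    (G : ℝ → Lp ℝ 2 μ →L[ℝ] Lp ℝ 2 μ) : Prop :=
  ∀ α > 0, ∀ u, G α u ∈ T.dom ∧
    ∀ v ∈ T.dom, T.Q (G α u) v + α * ⟪G α u, v⟫ = ⟪u, v⟫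

/-- `T` is positivity preserving. -/
def WideForm.PosPres {μ : Measure X} (T : WideForm μ) : Prop :=
  ∀ u ∈ T.dom, |u| ∈ T.dom ∧ T.Q |u| |u| ≤ T.Q u u

/-- `A` is `Q`-invariant, characterized through the form (valid for positivity
preserving forms). -/
def FormInvariant {μ : Measure X} (T : WideForm μ) (A : Set X) : Prop :=
  MeasurableSet A ∧ ∀ f ∈ T.dom, indMul A f ∈ T.dom ∧
    T.Q f f = T.Q (indMul A f) (indMul A f) + T.Q (f - indMul A f) (f - indMul A f)

/-- `A` is a `Q`-connected component: an invariant set of positive measure such that the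
restriction `Q_A` is irreducible. -/
def IsComponent {μ : Measure X} (T : WideForm μ) (A : Set X) : Prop :=
  FormInvariant T A ∧ 0 < μ A ∧
    ∀ B : Set X, MeasurableSet B → B ⊆ A →
      (∀ f ∈ T.dom, indMul A f = f →
        (indMul B f ∈ T.dom ∧
          T.Q f f = T.Q (indMul B f) (indMul B f)
            + T.Q (f - indMul B f) (f - indMul B f))) →
      μ B = 0 ∨ μ (A \ B) = 0

/-!
Invariant sets form a Boolean algebra (up to null sets), and multiplication by the indicator of
an invariant set commutes with the resolvent. If `A₁, …, Aₙ` are a.e. disjoint invariant sets of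
positive measure, the unit vectors `wᵢ = 1_{Aᵢ} f / ‖1_{Aᵢ} f‖` satisfy `⟪wᵢ, G₁ wᵢ⟫ ≥ c` because
`G₁ f ≥ c f`, so `‖G₁ wᵢ‖ ≥ c`, while the vectors `G₁ wᵢ = 1_{Aᵢ} G₁ wᵢ` are pairwise orthogonal,
hence `c`-separated. They lie in the image of the unit ball under the compact operator `G₁`, so
`n` is bounded. A partition of `X` into invariant sets of maximal size therefore consists of atoms
of this algebra, which are exactly the `Q`-connected components; two partitions into atoms agree up
to null sets because atoms meeting in positive measure coincide a.e.
-/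

open Set Function

section IndMul

variable {μ : Measure X} {A B : Set X}

lemma indMul_coeFn (hA : MeasurableSet A) (f : Lp ℝ 2 μ) :
    (indMul A f : X → ℝ) =ᵐ[μ] A.indicator f := by
  rw [indMul, dif_pos hA]
  exact MemLp.coeFn_toLp _

lemma indMul_add (hA : MeasurableSet A) (f g : Lp ℝ 2 μ) :
    indMul A (f + g) = indMul A f + indMul A g := by
  refine Lp.ext ?_
  filter_upwards [indMul_coeFn hA (f + g), indMul_coeFn hA f, indMul_coeFn hA g,
    Lp.coeFn_add f g, Lp.coeFn_add (indMul A f) (indMul A g)] with x h h₁ h₂ hfg h₁₂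
  rw [h, h₁₂, Pi.add_apply, h₁, h₂]
  by_cases hx : x ∈ A
  · rw [indicator_of_mem hx, indicator_of_mem hx, indicator_of_mem hx, hfg, Pi.add_apply]
  · rw [indicator_of_notMem hx, indicator_of_notMem hx, indicator_of_notMem hx, add_zero]

lemma indMul_indMul (hA : MeasurableSet A) (hB : MeasurableSet B) (f : Lp ℝ 2 μ) :
    indMul A (indMul B f) = indMul (A ∩ B) f := by
  refine Lp.ext ?_
  filter_upwards [indMul_coeFn hA (indMul B f), indMul_coeFn (hA.inter hB) f,
    (indMul_coeFn hB f).indicator (s := A)] with x h₁ h₂ h₃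
  rw [h₁, h₃, h₂, indicator_indicator]

lemma indMul_idem (hA : MeasurableSet A) (f : Lp ℝ 2 μ) : indMul A (indMul A f) = indMul A f := by
  rw [indMul_indMul hA hA, inter_self]

lemma indMul_comm (hA : MeasurableSet A) (hB : MeasurableSet B) (f : Lp ℝ 2 μ) :
    indMul A (indMul B f) = indMul B (indMul A f) := by
  rw [indMul_indMul hA hB, indMul_indMul hB hA, inter_comm]

lemma indMul_compl (hA : MeasurableSet A) (f : Lp ℝ 2 μ) : indMul Aᶜ f = f - indMul A f := by
  refine Lp.ext ?_
  filter_upwards [indMul_coeFn hA.compl f, indMul_coeFn hA f,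
    Lp.coeFn_sub f (indMul A f)] with x h₁ h₂ h₃
  rw [h₁, h₃, Pi.sub_apply, h₂]
  by_cases hx : x ∈ A <;> simp [hx]

lemma indMul_univ (f : Lp ℝ 2 μ) : indMul univ f = f := by
  refine Lp.ext ?_
  filter_upwards [indMul_coeFn MeasurableSet.univ f] with x h
  rw [h, indicator_univ]

lemma indMul_of_measure_eq_zero (hA : MeasurableSet A) (hA0 : μ A = 0) (f : Lp ℝ 2 μ) :
    indMul A f = 0 := by
  refine Lp.ext ?_
  filter_upwards [indMul_coeFn hA f, Lp.coeFn_zero ℝ 2 μ,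
    measure_eq_zero_iff_ae_notMem.mp hA0] with x h₁ h₂ hx
  rw [h₁, h₂, indicator_of_notMem hx, Pi.zero_apply]

lemma inner_indMul_left (hA : MeasurableSet A) (u v : Lp ℝ 2 μ) :
    ⟪indMul A u, v⟫ = ⟪u, indMul A v⟫ := by
  rw [L2.inner_def, L2.inner_def]
  refine integral_congr_ae ?_
  filter_upwards [indMul_coeFn hA u, indMul_coeFn hA v] with x h₁ h₂
  rw [h₁, h₂]
  by_cases hx : x ∈ A <;> simp [hx]

lemma inner_indMul_self (hA : MeasurableSet A) (f : Lp ℝ 2 μ) :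
    ⟪indMul A f, f⟫ = ‖indMul A f‖ ^ 2 := by
  rw [← real_inner_self_eq_norm_sq, ← inner_indMul_left hA, indMul_idem hA]

lemma inner_indMul_indMul_of_aedisjoint (hA : MeasurableSet A) (hB : MeasurableSet B)
    (h : AEDisjoint μ A B) (u v : Lp ℝ 2 μ) : ⟪indMul A u, indMul B v⟫ = 0 := by
  rw [inner_indMul_left hA, indMul_indMul hA hB, indMul_of_measure_eq_zero (hA.inter hB) h,
    inner_zero_right]

lemma indMul_nonneg (hA : MeasurableSet A) {f : Lp ℝ 2 μ} (hf : 0 ≤ᵐ[μ] (f : X → ℝ)) :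
    0 ≤ᵐ[μ] (indMul A f : X → ℝ) := by
  filter_upwards [indMul_coeFn hA f, hf] with x h₁ h₂
  rw [h₁]
  exact indicator_nonneg (fun _ _ => h₂) x

lemma indMul_ne_zero (hA : MeasurableSet A) (hA0 : 0 < μ A) {f : Lp ℝ 2 μ}
    (hf : ∀ᵐ x ∂μ, 0 < (f : X → ℝ) x) : indMul A f ≠ 0 := by
  intro h
  refine hA0.ne' (measure_eq_zero_iff_ae_notMem.mpr ?_)
  filter_upwards [indMul_coeFn hA f, hf, h ▸ Lp.coeFn_zero ℝ 2 μ] with x h₁ h₂ h₃ hx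
  rw [h₁, indicator_of_mem hx] at h₃
  exact h₂.ne' h₃

end IndMul

lemma MeasureTheory.Lp.inner_le_inner_of_nonneg {μ : Measure X} {u w₁ w₂ : Lp ℝ 2 μ}
    (hu : 0 ≤ᵐ[μ] (u : X → ℝ)) (h : w₁ ≤ w₂) : ⟪u, w₁⟫ ≤ ⟪u, w₂⟫ := by
  rw [L2.inner_def, L2.inner_def]
  refine integral_mono_ae (L2.integrable_inner u w₁) (L2.integrable_inner u w₂) ?_
  filter_upwards [hu, (Lp.coeFn_le w₁ w₂).mpr h] with x h₁ h₂
  simpa [mul_comm] using mul_le_mul_of_nonneg_left h₂ h₁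

namespace WideForm

variable {μ : Measure X} (T : WideForm μ)

lemma Q_add_right (u v w : Lp ℝ 2 μ) : T.Q u (v + w) = T.Q u v + T.Q u w := by
  rw [T.symm, T.add_left, T.symm v, T.symm w]

lemma Q_sub_left (u v w : Lp ℝ 2 μ) : T.Q (u - v) w = T.Q u w - T.Q v w := by
  have := T.smul_left (-1) v w
  rw [sub_eq_add_neg, T.add_left, neg_one_smul] at *
  linarith

lemma Q_eq_add_iff_Q_sub_eq_zero {p w : Lp ℝ 2 μ} :
    T.Q w w = T.Q p p + T.Q (w - p) (w - p) ↔ T.Q p (w - p) = 0 := by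
  have h : T.Q w w = T.Q p p + 2 * T.Q p (w - p) + T.Q (w - p) (w - p) := by
    conv_lhs => rw [← add_sub_cancel p w]
    rw [T.add_left, Q_add_right, Q_add_right, T.symm (w - p) p]
    ring
  constructor <;> intro <;> linarith

variable {T}

lemma IsResolvent.eq_of_forall {G : ℝ → Lp ℝ 2 μ →L[ℝ] Lp ℝ 2 μ} (hG : T.IsResolvent G)
    {α : ℝ} (hα : 0 < α) {u g : Lp ℝ 2 μ} (hg : g ∈ T.dom)
    (h : ∀ v ∈ T.dom, T.Q g v + α * ⟪g, v⟫ = ⟪u, v⟫) : G α u = g := by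
  obtain ⟨hGu, hGu_eq⟩ := hG α hα u
  set d := g - G α u
  have hd : T.Q d d + α * ⟪d, d⟫ = 0 := by
    have hdom : d ∈ T.dom := T.dom.sub_mem hg hGu
    rw [Q_sub_left, inner_sub_left]
    linarith [h d hdom, hGu_eq d hdom]
  have hdd : ⟪d, d⟫ = 0 := by
    nlinarith [T.nonneg d, real_inner_self_nonneg (x := d)]
  exact (sub_eq_zero.mp (inner_self_eq_zero.mp hdd)).symm

end WideForm

namespace FormInvariant

open WideForm

variable {μ : Measure X} {T : WideForm μ} {A B : Set X} {u v w : Lp ℝ 2 μ}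

lemma indMul_mem (hA : FormInvariant T A) (hu : u ∈ T.dom) : indMul A u ∈ T.dom :=
  (hA.2 u hu).1

lemma Q_indMul_sub_self (hA : FormInvariant T A) (hu : u ∈ T.dom) :
    T.Q (indMul A u) (u - indMul A u) = 0 :=
  T.Q_eq_add_iff_Q_sub_eq_zero.mp (hA.2 u hu).2

/-- Polarization of `Q_indMul_sub_self`, applied to `indMul A u + v`. -/
lemma Q_indMul_sub (hA : FormInvariant T A) (hu : u ∈ T.dom) (hv : v ∈ T.dom) :
    T.Q (indMul A u) (v - indMul A v) = 0 := by
  have h := hA.Q_indMul_sub_self (T.dom.add_mem (hA.indMul_mem hu) hv)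
  rwa [indMul_add hA.1, indMul_idem hA.1, add_sub_add_left_eq_sub, T.add_left,
    hA.Q_indMul_sub_self hv, add_zero] at h

lemma Q_indMul_left (hA : FormInvariant T A) (hu : u ∈ T.dom) (hv : v ∈ T.dom) :
    T.Q (indMul A u) v = T.Q u (indMul A v) :=
  calc T.Q (indMul A u) v
      = T.Q (indMul A u) (indMul A v) + T.Q (indMul A u) (v - indMul A v) := by
        rw [← Q_add_right, add_sub_cancel]
    _ = T.Q (indMul A u) (indMul A v) + T.Q (u - indMul A u) (indMul A v) := by
        rw [hA.Q_indMul_sub hu hv, T.symm (u - _), hA.Q_indMul_sub hv hu]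
    _ = T.Q u (indMul A v) := by rw [← T.add_left, add_sub_cancel]

lemma resolvent_indMul {G : ℝ → Lp ℝ 2 μ →L[ℝ] Lp ℝ 2 μ} (hG : T.IsResolvent G)
    (hA : FormInvariant T A) {α : ℝ} (hα : 0 < α) (u : Lp ℝ 2 μ) :
    G α (indMul A u) = indMul A (G α u) := by
  obtain ⟨hGu, hGu_eq⟩ := hG α hα u
  refine hG.eq_of_forall hα (hA.indMul_mem hGu) fun v hv => ?_
  rw [hA.Q_indMul_left hGu hv, inner_indMul_left hA.1, hGu_eq _ (hA.indMul_mem hv),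
    inner_indMul_left hA.1]

/-- Splitting `w - Z = (w - 1_A w) + (1_A w - Z)` for `Z = 1_B 1_A w`, the first part is
`Q`-orthogonal to `Z = 1_A Z` by invariance of `A`. -/
lemma Q_indMul_indMul_sub (hA : FormInvariant T A) (hB : MeasurableSet B) (hw : w ∈ T.dom)
    (hZ : indMul B (indMul A w) ∈ T.dom)
    (h : T.Q (indMul B (indMul A w)) (indMul A w - indMul B (indMul A w)) = 0) :
    T.Q (indMul B (indMul A w)) (w - indMul B (indMul A w)) = 0 := by
  have hAZ : indMul A (indMul B (indMul A w)) = indMul B (indMul A w) := by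
    rw [indMul_comm hA.1 hB, indMul_idem hA.1]
  rw [← sub_add_sub_cancel w (indMul A w), Q_add_right, h, add_zero]
  simpa only [hAZ] using hA.Q_indMul_sub hZ hw

protected lemma univ : FormInvariant T (univ : Set X) := by
  refine ⟨MeasurableSet.univ, fun w hw => ⟨by rwa [indMul_univ], ?_⟩⟩
  rw [T.Q_eq_add_iff_Q_sub_eq_zero, indMul_univ, sub_self, T.symm, ← zero_smul ℝ (0 : Lp ℝ 2 μ),
    T.smul_left, zero_mul]

lemma compl (hA : FormInvariant T A) : FormInvariant T Aᶜ := by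
  refine ⟨hA.1.compl, fun w hw => ?_⟩
  rw [indMul_compl hA.1, sub_sub_cancel, add_comm]
  exact ⟨T.dom.sub_mem hw (hA.indMul_mem hw), (hA.2 w hw).2⟩

lemma inter (hA : FormInvariant T A) (hB : FormInvariant T B) : FormInvariant T (A ∩ B) := by
  refine ⟨hA.1.inter hB.1, fun w hw => ?_⟩
  have hZ := hA.indMul_mem (hB.indMul_mem hw)
  rw [← indMul_indMul hA.1 hB.1, T.Q_eq_add_iff_Q_sub_eq_zero]
  exact ⟨hZ, hB.Q_indMul_indMul_sub hA.1 hw hZ (hA.Q_indMul_sub_self (hB.indMul_mem hw))⟩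

lemma diff (hA : FormInvariant T A) (hB : FormInvariant T B) : FormInvariant T (A \ B) :=
  hA.inter hB.compl

/-- A set that is invariant for the restriction `Q_A` of `Q` to an invariant set `A` is
invariant for `Q`. -/
lemma of_restrict (hA : FormInvariant T A) (hB : MeasurableSet B) (hBA : B ⊆ A)
    (h : ∀ f ∈ T.dom, indMul A f = f →
      (indMul B f ∈ T.dom ∧
        T.Q f f = T.Q (indMul B f) (indMul B f) + T.Q (f - indMul B f) (f - indMul B f))) :
    FormInvariant T B := by
  refine ⟨hB, fun w hw => ?_⟩
  obtain ⟨hZ, hpyth⟩ := h _ (hA.indMul_mem hw) (indMul_idem hA.1 w)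
  rw [← inter_eq_left.mpr hBA, ← indMul_indMul hB hA.1,
    T.Q_eq_add_iff_Q_sub_eq_zero]
  exact ⟨hZ, hA.Q_indMul_indMul_sub hB hw hZ (T.Q_eq_add_iff_Q_sub_eq_zero.mp hpyth)⟩

end FormInvariant

section Atoms

variable {μ : Measure X}

def IsInvariantAtom (T : WideForm μ) (A : Set X) : Prop :=
  FormInvariant T A ∧ 0 < μ A ∧
    ∀ B : Set X, MeasurableSet B → B ⊆ A → FormInvariant T B → μ B = 0 ∨ μ (A \ B) = 0

variable {T : WideForm μ} {A B : Set X}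

lemma isInvariantAtom_iff_isComponent : IsInvariantAtom T A ↔ IsComponent T A :=
  ⟨fun ⟨hA, hA0, hatom⟩ =>
      ⟨hA, hA0, fun B hB hBA hres => hatom B hB hBA (hA.of_restrict hB hBA hres)⟩,
    fun ⟨hA, hA0, hcomp⟩ =>
      ⟨hA, hA0, fun B hB hBA hBinv => hcomp B hB hBA fun f hf _ => hBinv.2 f hf⟩⟩

lemma IsInvariantAtom.measure_diff_eq_zero (hA : IsInvariantAtom T A) (hB : FormInvariant T B)
    (h : 0 < μ (A ∩ B)) : μ (A \ B) = 0 := by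
  rcases hA.2.2 (A ∩ B) (hA.1.1.inter hB.1) inter_subset_left (hA.1.inter hB) with h0 | h0
  · exact absurd h0 h.ne'
  · rwa [sdiff_self_inter] at h0

lemma IsInvariantAtom.ae_eq_of_pos_inter (hA : IsInvariantAtom T A) (hB : IsInvariantAtom T B)
    (h : 0 < μ (A ∩ B)) : A =ᵐ[μ] B :=
  ae_eq_set.mpr ⟨hA.measure_diff_eq_zero hB.1 h,
    hB.measure_diff_eq_zero hA.1 (by rwa [inter_comm])⟩

end Atoms

lemma TotallyBounded.exists_card_le_of_pairwise_le_dist {α : Type*} [PseudoMetricSpace α]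
    {s : Set α} (hs : TotallyBounded s) {δ : ℝ} (hδ : 0 < δ) :
    ∃ N : ℕ, ∀ (n : ℕ) (x : Fin n → α), (∀ i, x i ∈ s) →
      Pairwise (fun i j => δ ≤ dist (x i) (x j)) → n ≤ N := by
  obtain ⟨t, ht, hcover⟩ := Metric.totallyBounded_iff.mp hs (δ / 2) (half_pos hδ)
  refine ⟨ht.toFinset.card, fun n x hxs hsep => ?_⟩
  have hnet : ∀ i, ∃ y ∈ ht.toFinset, dist (x i) y < δ / 2 := fun i => by
    simpa using hcover (hxs i)
  choose y hyt hy using hnet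
  have hinj : Injective y := fun i j hij => by
    by_contra hne
    have := dist_triangle_right (x i) (x j) (y j)
    rw [← hij] at this
    linarith [hsep hne, hy i, hy j, hij ▸ hy j]
  simpa using Finset.card_le_card_of_injOn (s := Finset.univ) y (fun i _ => hyt i) hinj.injOn

lemma le_dist_of_inner_eq_zero {E : Type*} [NormedAddCommGroup E] [InnerProductSpace ℝ E]
    {x y : E} (h : ⟪x, y⟫ = 0) : ‖x‖ ≤ dist x y := by
  rw [dist_eq_norm, mul_self_le_mul_self_iff (norm_nonneg _) (norm_nonneg _),
    norm_sub_sq_eq_norm_sq_add_norm_sq_real h]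
  exact le_add_of_nonneg_right (mul_self_nonneg _)

section Counting

variable {μ : Measure X} {T : WideForm μ} {G : ℝ → Lp ℝ 2 μ →L[ℝ] Lp ℝ 2 μ} {A : Set X}
  {f : Lp ℝ 2 μ} {c : ℝ}

lemma FormInvariant.mul_norm_le_norm_resolvent (hG : T.IsResolvent G) (hA : FormInvariant T A)
    (hf : 0 ≤ᵐ[μ] (f : X → ℝ)) (hGf : c • f ≤ G 1 f) :
    c * ‖indMul A f‖ ≤ ‖G 1 (indMul A f)‖ := by
  have hinner : ‖indMul A f‖ * (c * ‖indMul A f‖) ≤ ‖indMul A f‖ * ‖G 1 (indMul A f)‖ :=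
    calc ‖indMul A f‖ * (c * ‖indMul A f‖) = ⟪indMul A f, c • f⟫ := by
          rw [real_inner_smul_right, inner_indMul_self hA.1]; ring
      _ ≤ ⟪indMul A f, G 1 f⟫ := Lp.inner_le_inner_of_nonneg (indMul_nonneg hA.1 hf) hGf
      _ = ⟪indMul A f, G 1 (indMul A f)⟫ := by
          rw [hA.resolvent_indMul hG one_pos, ← inner_indMul_left hA.1, indMul_idem hA.1]
      _ ≤ ‖indMul A f‖ * ‖G 1 (indMul A f)‖ := real_inner_le_norm _ _
  rcases (norm_nonneg (indMul A f)).eq_or_lt with hu | hu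
  · rw [← hu, mul_zero]; exact norm_nonneg _
  · exact le_of_mul_le_mul_left hinner hu

lemma exists_card_le_of_pairwise_aedisjoint (hG : T.IsResolvent G)
    (hcpt : IsCompactOperator (G 1)) (hf : ∀ᵐ x ∂μ, 0 < (f : X → ℝ) x) (hc : 0 < c)
    (hGf : c • f ≤ G 1 f) :
    ∃ N : ℕ, ∀ (n : ℕ) (A : Fin n → Set X), (∀ i, FormInvariant T (A i)) →
      (∀ i, 0 < μ (A i)) → Pairwise (AEDisjoint μ on A) → n ≤ N := by
  obtain ⟨N, hN⟩ := ((hcpt.isCompact_closure_image_closedBall 1).totallyBounded.subset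
    subset_closure).exists_card_le_of_pairwise_le_dist hc
  refine ⟨N, fun n A hA hA0 hdisj => hN n (fun i => G 1 (‖indMul (A i) f‖⁻¹ • indMul (A i) f))
    (fun i => mem_image_of_mem _ ?_) fun i j hij => ?_⟩
  · rw [Metric.mem_closedBall, dist_zero_right, norm_smul, norm_inv, norm_norm,
      inv_mul_cancel₀ (norm_ne_zero_iff.mpr (indMul_ne_zero (hA i).1 (hA0 i) hf))]
  have hnorm : c ≤ ‖G 1 (‖indMul (A i) f‖⁻¹ • indMul (A i) f)‖ := by
    have hpos := norm_pos_iff.mpr (indMul_ne_zero (hA i).1 (hA0 i) hf)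
    rw [map_smul, norm_smul, norm_inv, norm_norm, le_inv_mul_iff₀ hpos, mul_comm]
    exact (hA i).mul_norm_le_norm_resolvent hG (hf.mono fun _ hx => hx.le) hGf
  refine hnorm.trans (le_dist_of_inner_eq_zero ?_)
  rw [map_smul, map_smul, (hA i).resolvent_indMul hG one_pos, (hA j).resolvent_indMul hG one_pos,
    real_inner_smul_left, real_inner_smul_right,
    inner_indMul_indMul_of_aedisjoint (hA i).1 (hA j).1 (hdisj hij), mul_zero, mul_zero]

end Counting

section Partitions

variable {μ : Measure X}

structure IsInvariantPartition (T : WideForm μ) {ι : Type*} (C : ι → Set X) : Prop where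
  invariant : ∀ i, FormInvariant T (C i)
  pos : ∀ i, 0 < μ (C i)
  aedisjoint : Pairwise (AEDisjoint μ on C)
  ae_cover : μ (⋃ i, C i)ᶜ = 0

variable {T : WideForm μ}

lemma exists_isInvariantPartition (T : WideForm μ) :
    ∃ (n : ℕ) (C : Fin n → Set X), IsInvariantPartition T C := by
  by_cases hμ : μ univ = 0
  · exact ⟨0, Fin.elim0, ⟨fun i => i.elim0, fun i => i.elim0, fun i => i.elim0, by simpa using hμ⟩⟩
  · exact ⟨1, fun _ => univ, ⟨fun _ => .univ, fun _ => pos_iff_ne_zero.mpr hμ,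
      fun i j hij => (hij (Subsingleton.elim i j)).elim,
      by rw [iUnion_const, compl_univ, measure_empty]⟩⟩

lemma IsInvariantPartition.split {n : ℕ} {C : Fin n → Set X} (hC : IsInvariantPartition T C)
    (i : Fin n) {B : Set X} (hB : FormInvariant T B) (hBC : B ⊆ C i) (hB0 : 0 < μ B)
    (hCB0 : 0 < μ (C i \ B)) :
    IsInvariantPartition T (Fin.cons (C i \ B) (update C i B) : Fin (n + 1) → Set X) := by
  have hsub : ∀ k, update C i B k ⊆ C k :=
    (forall_update_iff C fun k s => s ⊆ C k).mpr ⟨hBC, fun _ _ => subset_rfl⟩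
  have hdiff : ∀ k, AEDisjoint μ (C i \ B) (update C i B k) :=
    (forall_update_iff C fun _ s => AEDisjoint μ (C i \ B) s).mpr
      ⟨disjoint_sdiff_left.aedisjoint,
        fun k hk => (hC.aedisjoint hk.symm).mono sdiff_subset subset_rfl⟩
  refine ⟨Fin.forall_fin_succ.mpr ⟨(hC.invariant i).diff hB, ?_⟩,
    Fin.forall_fin_succ.mpr ⟨hCB0, ?_⟩, ?_, ?_⟩
  · exact (forall_update_iff C fun _ s => FormInvariant T s).mpr ⟨hB, fun k _ => hC.invariant k⟩
  · exact (forall_update_iff C fun _ s => 0 < μ s).mpr ⟨hB0, fun k _ => hC.pos k⟩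
  · intro j k hjk
    induction j using Fin.cases with
    | zero => induction k using Fin.cases with
      | zero => exact (hjk rfl).elim
      | succ k => exact hdiff k
    | succ j => induction k using Fin.cases with
      | zero => exact (hdiff j).symm
      | succ k =>
        exact (hC.aedisjoint fun h => hjk (congrArg _ h)).mono (hsub j) (hsub k)
  · refine measure_mono_null (compl_subset_compl.mpr fun x hx => ?_) hC.ae_cover
    obtain ⟨k, hk⟩ := mem_iUnion.mp hx
    rw [mem_iUnion]
    by_cases hki : k = i
    · subst hki
      by_cases hxB : x ∈ B
      · exact ⟨k.succ, by simpa using hxB⟩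
      · exact ⟨0, by simpa using ⟨hk, hxB⟩⟩
    · exact ⟨k.succ, by simpa [hki] using hk⟩

lemma IsInvariantPartition.isInvariantAtom_of_maximal {n : ℕ} {C : Fin n → Set X}
    (hC : IsInvariantPartition T C)
    (hmax : ∀ D : Fin (n + 1) → Set X, ¬IsInvariantPartition T D) (i : Fin n) :
    IsInvariantAtom T (C i) := by
  refine ⟨hC.invariant i, hC.pos i, fun B _ hBC hB => ?_⟩
  by_contra! h
  exact hmax _ (hC.split i hB hBC (pos_iff_ne_zero.mpr h.1) (pos_iff_ne_zero.mpr h.2))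

lemma exists_isInvariantPartition_isInvariantAtom
    (hbound : ∃ N : ℕ, ∀ (n : ℕ) (C : Fin n → Set X), IsInvariantPartition T C → n ≤ N) :
    ∃ (n : ℕ) (C : Fin n → Set X), IsInvariantPartition T C ∧ ∀ i, IsInvariantAtom T (C i) := by
  classical
  obtain ⟨N, hN⟩ := hbound
  obtain ⟨m, hm⟩ := exists_isInvariantPartition T
  let P (n : ℕ) : Prop := ∃ C : Fin n → Set X, IsInvariantPartition T C
  have hP : P (Nat.findGreatest P N) := Nat.findGreatest_spec (hN m hm.choose hm.choose_spec) hm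
  obtain ⟨C, hC⟩ := hP
  refine ⟨_, C, hC, hC.isInvariantAtom_of_maximal fun D hD => ?_⟩
  have := Nat.le_findGreatest (P := P) (hN _ D hD) ⟨D, hD⟩
  omega

end Partitions

section AEPartitions

variable {μ : Measure X} {ι κ : Type*}

lemma exists_pos_measure_inter_of_ae_cover [Countable ι] {F : ι → Set X}
    (hcov : μ (⋃ i, F i)ᶜ = 0) {E : Set X} (hE : 0 < μ E) : ∃ i, 0 < μ (E ∩ F i) := by
  by_contra! h
  refine hE.ne' ?_
  rw [← inter_union_compl E (⋃ i, F i), inter_iUnion]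
  exact measure_union_null (measure_iUnion_null fun i => nonpos_iff_eq_zero.mp (h i))
    (measure_mono_null inter_subset_right hcov)

lemma eq_of_ae_eq_of_pairwise_aedisjoint {C : ι → Set X} (hpos : ∀ i, 0 < μ (C i))
    (hdisj : Pairwise (AEDisjoint μ on C)) {i j : ι} (h : C i =ᵐ[μ] C j) : i = j := by
  by_contra hij
  refine (hpos i).ne' ?_
  rw [← inter_self (C i), measure_congr ((ae_eq_refl (C i)).inter h)]
  exact hdisj hij

lemma exists_equiv_ae_eq_of_ae_partitions [Countable ι] [Countable κ] {C : ι → Set X}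
    {D : κ → Set X} (hCpos : ∀ i, 0 < μ (C i)) (hDpos : ∀ j, 0 < μ (D j))
    (hCdisj : Pairwise (AEDisjoint μ on C)) (hDdisj : Pairwise (AEDisjoint μ on D))
    (hCcov : μ (⋃ i, C i)ᶜ = 0) (hDcov : μ (⋃ j, D j)ᶜ = 0)
    (hmeet : ∀ i j, 0 < μ (C i ∩ D j) → C i =ᵐ[μ] D j) :
    ∃ e : κ ≃ ι, ∀ j, D j =ᵐ[μ] C (e j) := by
  have hmatch : ∀ j, ∃ i, D j =ᵐ[μ] C i := fun j => by
    obtain ⟨i, hi⟩ := exists_pos_measure_inter_of_ae_cover hCcov (hDpos j)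
    exact ⟨i, (hmeet i j (by rwa [inter_comm])).symm⟩
  choose e he using hmatch
  have hinj : Injective e := fun j j' h =>
    eq_of_ae_eq_of_pairwise_aedisjoint hDpos hDdisj ((he j).trans (h ▸ (he j').symm))
  have hsurj : Surjective e := fun i => by
    obtain ⟨j, hj⟩ := exists_pos_measure_inter_of_ae_cover hDcov (hCpos i)
    exact ⟨j, eq_of_ae_eq_of_pairwise_aedisjoint hCpos hCdisj
      ((he j).symm.trans (hmeet i j hj).symm)⟩
  exact ⟨Equiv.ofBijective e ⟨hinj, hsurj⟩, he⟩

end AEPartitions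

theorem gerlach_decomposition_general {μ : Measure X} (T : WideForm μ)
    (G : ℝ → Lp ℝ 2 μ →L[ℝ] Lp ℝ 2 μ) (hG : T.IsResolvent G)
    (hcpt : ∀ α > 0, IsCompactOperator (G α))
    (f : Lp ℝ 2 μ) (hf : ∀ᵐ x ∂μ, 0 < (f : X → ℝ) x)
    (c : ℝ) (hc : 0 < c) (hGf : c • f ≤ G 1 f) :
    ∃ (l : ℕ) (C : Fin l → Set X),
      (∀ i, IsComponent T (C i)) ∧
      (∀ i j, i ≠ j → μ (C i ∩ C j) = 0) ∧
      μ ((⋃ i, C i)ᶜ) = 0 ∧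
      ∀ (l' : ℕ) (D : Fin l' → Set X),
        (∀ i, IsComponent T (D i)) → (∀ i j, i ≠ j → μ (D i ∩ D j) = 0) →
        μ ((⋃ i, D i)ᶜ) = 0 →
        ∃ e : Fin l' ≃ Fin l, ∀ i, μ (symmDiff (D i) (C (e i))) = 0 := by
  obtain ⟨N, hN⟩ := exists_card_le_of_pairwise_aedisjoint hG (hcpt 1 one_pos) hf hc hGf
  obtain ⟨l, C, hC, hCatom⟩ := exists_isInvariantPartition_isInvariantAtom
    ⟨N, fun n C hC => hN n C hC.invariant hC.pos hC.aedisjoint⟩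
  refine ⟨l, C, fun i => isInvariantAtom_iff_isComponent.mp (hCatom i),
    fun i j hij => hC.aedisjoint hij, hC.ae_cover, fun l' D hD hDdisj hDcov => ?_⟩
  have hDatom j := isInvariantAtom_iff_isComponent.mpr (hD j)
  obtain ⟨e, he⟩ := exists_equiv_ae_eq_of_ae_partitions hC.pos (fun j => (hD j).2.1)
    hC.aedisjoint (fun j j' h => hDdisj j j' h) hC.ae_cover hDcov
    fun i j h => (hCatom i).ae_eq_of_pos_inter (hDatom j) h
  exact ⟨e, fun j => measure_symmDiff_eq_zero_iff.mpr (he j)⟩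

/-- Gerlach's lemma: a positivity preserving form in the wide sense with
compact resolvent admitting `f > 0` a.e. with `G₁ f ≥ c f` decomposes the space into
finitely many `Q`-connected components, uniquely up to null sets. -/
theorem gerlach_decomposition {μ : Measure X} (T : WideForm μ) (hpp : T.PosPres)
    (G : ℝ → Lp ℝ 2 μ →L[ℝ] Lp ℝ 2 μ) (hG : T.IsResolvent G)
    (hcpt : ∀ α > 0, IsCompactOperator (G α))
    (f : Lp ℝ 2 μ) (hf : ∀ᵐ x ∂μ, 0 < (f : X → ℝ) x)
    (c : ℝ) (hc : 0 < c) (hGf : c • f ≤ G 1 f) :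
    ∃ (l : ℕ) (C : Fin l → Set X),
      (∀ i, IsComponent T (C i)) ∧
      (∀ i j, i ≠ j → μ (C i ∩ C j) = 0) ∧
      μ ((⋃ i, C i)ᶜ) = 0 ∧
      ∀ (l' : ℕ) (D : Fin l' → Set X),
        (∀ i, IsComponent T (D i)) → (∀ i j, i ≠ j → μ (D i ∩ D j) = 0) →
        μ ((⋃ i, D i)ᶜ) = 0 →
        ∃ e : Fin l' ≃ Fin l, ∀ i, μ (symmDiff (D i) (C (e i))) = 0 :=
  gerlach_decomposition_general T G hG hcpt f hf c hc hGf
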